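/- arXiv:1906.05672 — 4 statements merged into one kernel-verified Lean document; each statement's English description precedes it below -/
import Mathlib

section
/- For the non-symmetric metric g_{ij} on ℝ⁴ given by the matrix with rows (s₀, n₀, n₁, n₂), (−n₀, s₁, n₃, n₄), (−n₁, −n₃, s₂, n₅), (−n₂, −n₄, −n₅, s₃), with g := s₀s₁s₂s₃, the torsion components T^i_{jk} = Γ^i_{jk} − Γ^i_{kj} satisfy the double contraction identity g^{\underline{γδ}} T^ζ_{γε} T^ε_{δζ} = −6 g⁻¹ ( (n₃′(t))² s₃(t) + (n₄′(t))² s₂(t) + (n₅′(t))² s₁(t) ); consequently the scalar curvature with torsion ⁰R̃ := R + ¼ g^{\underline{γδ}} T^β_{γα} T^α_{δβ} equals R − (3/2) g⁻¹ ( s₃(t)(n₃′(t))² + s₂(t)(n₄′(t))² + s₁(t)(n₅′(t))² ), where R is the scalar curvature of the symmetric part of the metric. -/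
noncomputable section

/-- All metric components depend only on the time coordinate `t`, so the partial
derivative in direction `k` is `d/dt` for `k = 0` and `0` otherwise. -/
def pdT (k : Fin 4) (f : ℝ → ℝ) (t : ℝ) : ℝ := if k = 0 then deriv f t else 0

/-- Generalized Christoffel symbols of the first kind
`Γ_{i.jk} = ½(∂_k g_{ji} − ∂_i g_{jk} + ∂_j g_{ik})`. -/
def chr1 (g : Fin 4 → Fin 4 → ℝ → ℝ) (i j k : Fin 4) (t : ℝ) : ℝ :=
  (1 / 2) * (pdT k (g j i) t - pdT i (g j k) t + pdT j (g i k) t)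

/-- Generalized Christoffel symbols of the second kind for a diagonal symmetric part:
`Γ^i_{jk} = (s_i)⁻¹ Γ_{i.jk}` (no sum over `i`). -/
def chr2 (sd : Fin 4 → ℝ → ℝ) (g : Fin 4 → Fin 4 → ℝ → ℝ) (i j k : Fin 4) (t : ℝ) : ℝ :=
  (sd i t)⁻¹ * chr1 g i j k t

/-- Torsion `T^i_{jk} = Γ^i_{jk} − Γ^i_{kj}`. -/
def tors (sd : Fin 4 → ℝ → ℝ) (g : Fin 4 → Fin 4 → ℝ → ℝ) (i j k : Fin 4) (t : ℝ) : ℝ :=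
  chr2 sd g i j k t - chr2 sd g i k j t

/-- The non-symmetric metric with rows `(s₀, n₀, n₁, n₂)`, `(−n₀, s₁, n₃, n₄)`,
`(−n₁, −n₃, s₂, n₅)`, `(−n₂, −n₄, −n₅, s₃)`. -/
def metG (s₀ s₁ s₂ s₃ n₀ n₁ n₂ n₃ n₄ n₅ : ℝ → ℝ) : Fin 4 → Fin 4 → ℝ → ℝ :=
  ![![s₀, n₀, n₁, n₂],
    ![-n₀, s₁, n₃, n₄],
    ![-n₁, -n₃, s₂, n₅],
    ![-n₂, -n₄, -n₅, s₃]]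

/-- Diagonal of the symmetric part of the metric. -/
def sdiag (s₀ s₁ s₂ s₃ : ℝ → ℝ) : Fin 4 → ℝ → ℝ := ![s₀, s₁, s₂, s₃]

end

/-!
For a metric depending on `t` alone, the `t`-derivatives of the symmetric part cancel in the
torsion: with `a'` the derivative of the antisymmetric part, the torsion with lowered first index
is `T_{i.jk} = δ_{k0} a'_{ji} + δ_{j0} a'_{ik} − δ_{i0} a'_{jk}`. This is antisymmetric in its
first and last index, so the double contraction is minus a weighted sum of squares
`∑ s_i⁻¹ s_j⁻¹ s_k⁻¹ (T_{i.jk})²`. Only triples with exactly one index equal to `0` contribute,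
each of the three positions giving `s₀⁻¹ ∑_{i,j ≠ 0} s_i⁻¹ s_j⁻¹ (a'_{ij})²`.
-/

/-- The `t`-derivative of the antisymmetric part `½(g_{ij} − g_{ji})`, taken as a difference of
derivatives because `deriv` is additive only on differentiable functions. -/
noncomputable def skewDeriv {ι : Type*} (g : ι → ι → ℝ → ℝ) (t : ℝ) (i j : ι) : ℝ :=
  (deriv (g i j) t - deriv (g j i) t) / 2

def timeTorsion {n : ℕ} (A : Fin (n + 1) → Fin (n + 1) → ℝ) (i j k : Fin (n + 1)) : ℝ :=
  (if k = 0 then A j i else 0) + (if j = 0 then A i k else 0) - (if i = 0 then A j k else 0)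

theorem skewDeriv_swap {ι : Type*} (g : ι → ι → ℝ → ℝ) (t : ℝ) (i j : ι) :
    skewDeriv g t j i = -skewDeriv g t i j := by
  simp only [skewDeriv]; ring

theorem chr1_sub_chr1 (g : Fin 4 → Fin 4 → ℝ → ℝ) (t : ℝ) (i j k : Fin 4) :
    chr1 g i j k t - chr1 g i k j t = timeTorsion (skewDeriv g t) i j k := by
  simp only [chr1, pdT, timeTorsion, skewDeriv]
  split_ifs <;> ring

theorem tors_eq_timeTorsion (sd : Fin 4 → ℝ → ℝ) (g : Fin 4 → Fin 4 → ℝ → ℝ) (t : ℝ) (i j k : Fin 4) :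
    tors sd g i j k t = (sd i t)⁻¹ * timeTorsion (skewDeriv g t) i j k := by
  rw [tors, chr2, chr2, ← mul_sub, chr1_sub_chr1]

section TimeTorsion

variable {n : ℕ} {A : Fin (n + 1) → Fin (n + 1) → ℝ}

theorem timeTorsion_swap (hA : ∀ i j, A j i = -A i j) (i j k : Fin (n + 1)) :
    timeTorsion A k j i = -timeTorsion A i j k := by
  simp only [timeTorsion, hA k i]
  split_ifs <;> ring

theorem sum_weighted_timeTorsion_sq (hA : ∀ i j, A j i = -A i j) (w : Fin (n + 1) → ℝ) :
    ∑ j, ∑ k, ∑ i, w j * w k * w i * timeTorsion A i j k ^ 2 =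
      3 * w 0 * ∑ i : Fin n, ∑ j : Fin n, w i.succ * w j.succ * A i.succ j.succ ^ 2 := by
  have hdiag : ∀ i, A i i = 0 := fun i => by linarith [hA i i]
  simp only [Fin.sum_univ_succ, timeTorsion, Fin.succ_ne_zero, hdiag, hA 0, ↓reduceIte, add_zero,
    zero_add, sub_zero, sub_self, zero_sub, add_neg_cancel, neg_sq, ne_eq, OfNat.ofNat_ne_zero,
    not_false_eq_true, zero_pow, mul_zero, Finset.sum_const_zero, Finset.sum_add_distrib]
  rw [Finset.sum_comm (f := fun (i j : Fin n) => w 0 * w i.succ * w j.succ * A j.succ i.succ ^ 2)]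
  simp only [Finset.mul_sum, ← Finset.sum_add_distrib]
  exact Finset.sum_congr rfl fun i _ => Finset.sum_congr rfl fun j _ => by ring

theorem sum_timeTorsion_contraction (hA : ∀ i j, A j i = -A i j) (w : Fin (n + 1) → ℝ) :
    ∑ γ, ∑ ε, ∑ ζ, w γ * (w ζ * timeTorsion A ζ γ ε) * (w ε * timeTorsion A ε γ ζ) =
      -3 * w 0 * ∑ i : Fin n, ∑ j : Fin n, w i.succ * w j.succ * A i.succ j.succ ^ 2 := by
  calc _ = -∑ γ, ∑ ε, ∑ ζ, w γ * w ε * w ζ * timeTorsion A ζ γ ε ^ 2 := by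
        simp only [← Finset.sum_neg_distrib]
        refine Finset.sum_congr rfl fun γ _ => Finset.sum_congr rfl fun ε _ =>
          Finset.sum_congr rfl fun ζ _ => ?_
        rw [timeTorsion_swap hA]
        ring
    _ = _ := by rw [sum_weighted_timeTorsion_sq hA]; ring

end TimeTorsion

theorem sum_skewDeriv_metG_sq (s₀ s₁ s₂ s₃ n₀ n₁ n₂ n₃ n₄ n₅ : ℝ → ℝ) (t : ℝ) (w : Fin 4 → ℝ) :
    ∑ i : Fin 3, ∑ j : Fin 3,
        w i.succ * w j.succ * skewDeriv (metG s₀ s₁ s₂ s₃ n₀ n₁ n₂ n₃ n₄ n₅) t i.succ j.succ ^ 2 =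
      2 * (w 1 * w 2 * deriv n₃ t ^ 2 + w 1 * w 3 * deriv n₄ t ^ 2 + w 2 * w 3 * deriv n₅ t ^ 2) := by
  simp only [Fin.sum_univ_three, Fin.succ_zero_eq_one, Fin.succ_one_eq_two, Fin.reduceSucc, skewDeriv,
    metG, Matrix.cons_val, deriv.neg]
  ring

theorem stmt_5_general (s₀ s₁ s₂ s₃ n₀ n₁ n₂ n₃ n₄ n₅ : ℝ → ℝ)
    (t : ℝ) (h1 : s₁ t ≠ 0) (h2 : s₂ t ≠ 0) (h3 : s₃ t ≠ 0) :
    let g := metG s₀ s₁ s₂ s₃ n₀ n₁ n₂ n₃ n₄ n₅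
    let sd := sdiag s₀ s₁ s₂ s₃
    let T := tors sd g
    let ginv : Fin 4 → Fin 4 → ℝ := fun i j => if i = j then (sd i t)⁻¹ else 0
    let gdet := s₀ t * s₁ t * s₂ t * s₃ t
    let Sg := (deriv n₃ t) ^ 2 * s₃ t + (deriv n₄ t) ^ 2 * s₂ t + (deriv n₅ t) ^ 2 * s₁ t
    let contr := ∑ γ, ∑ δ, ∑ ε, ∑ ζ, ginv γ δ * T ζ γ ε t * T ε δ ζ t
    contr = -6 * gdet⁻¹ * Sg ∧
    (∀ R : ℝ, R + (1 / 4) * contr = R - (3 / 2) * gdet⁻¹ * Sg) := by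
  intro g sd T ginv gdet Sg contr
  have hcontr : contr = -6 * gdet⁻¹ * Sg := by
    simp only [contr, T, g, ginv, tors_eq_timeTorsion, ite_mul, zero_mul, Finset.sum_ite_irrel,
      Finset.sum_const_zero, Finset.sum_ite_eq, Finset.mem_univ, if_true]
    rw [sum_timeTorsion_contraction (skewDeriv_swap _ t),
      sum_skewDeriv_metG_sq s₀ s₁ s₂ s₃ n₀ n₁ n₂ n₃ n₄ n₅ t fun i => (sd i t)⁻¹]
    simp only [gdet, Sg, sd, sdiag, Matrix.cons_val]
    field_simp
    ring
  exact ⟨hcontr, fun R => by rw [hcontr]; ring⟩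

/-- the double contraction of the torsion with the inverse symmetric part of
the metric, and the resulting scalar curvature with torsion. -/
theorem stmt_5 (s₀ s₁ s₂ s₃ n₀ n₁ n₂ n₃ n₄ n₅ : ℝ → ℝ)
    (hd : ∀ f ∈ [s₀, s₁, s₂, s₃, n₀, n₁, n₂, n₃, n₄, n₅], Differentiable ℝ f)
    (t : ℝ) (h0 : s₀ t ≠ 0) (h1 : s₁ t ≠ 0) (h2 : s₂ t ≠ 0) (h3 : s₃ t ≠ 0) :
    let g := metG s₀ s₁ s₂ s₃ n₀ n₁ n₂ n₃ n₄ n₅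
    let sd := sdiag s₀ s₁ s₂ s₃
    let T := tors sd g
    let ginv : Fin 4 → Fin 4 → ℝ := fun i j => if i = j then (sd i t)⁻¹ else 0
    let gdet := s₀ t * s₁ t * s₂ t * s₃ t
    let Sg := (deriv n₃ t) ^ 2 * s₃ t + (deriv n₄ t) ^ 2 * s₂ t + (deriv n₅ t) ^ 2 * s₁ t
    let contr := ∑ γ, ∑ δ, ∑ ε, ∑ ζ, ginv γ δ * T ζ γ ε t * T ε δ ζ t
    contr = -6 * gdet⁻¹ * Sg ∧
    (∀ R : ℝ, R + (1 / 4) * contr = R - (3 / 2) * gdet⁻¹ * Sg) :=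
  stmt_5_general s₀ s₁ s₂ s₃ n₀ n₁ n₂ n₃ n₄ n₅ t h1 h2 h3
end

section
/- For the non-symmetric metric g_{ij} on ℝ⁴ given by the matrix with rows (s₀, n₀, n₁, n₂), (−n₀, s₁, n₃, n₄), (−n₁, −n₃, s₂, n₅), (−n₂, −n₄, −n₅, s₃), with g := s₀s₁s₂s₃, and the energy-momentum tensor T_{ij} = ¼ g^{\underline{γδ}} T^ζ_{γε} T^ε_{δζ} g_{\underline{ij}} − (4/3) T^γ_{iδ} T^δ_{jγ} built from the torsion T^i_{jk} = Γ^i_{jk} − Γ^i_{kj}, the trace satisfies T^α_α := g^{\underline{αβ}} T_{αβ} = 2 g⁻¹ ( (n₃′(t))² s₃(t) + (n₄′(t))² s₂(t) + (n₅′(t))² s₁(t) ). -/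
set_option maxHeartbeats 4000000 in
/-- the trace of the energy-momentum tensor built from the torsion of the
non-symmetric metric `metG`. -/
theorem stmt_13 (s₀ s₁ s₂ s₃ n₀ n₁ n₂ n₃ n₄ n₅ : ℝ → ℝ)
    (hd : ∀ f ∈ [s₀, s₁, s₂, s₃, n₀, n₁, n₂, n₃, n₄, n₅], Differentiable ℝ f)
    (t : ℝ) (h0 : s₀ t ≠ 0) (h1 : s₁ t ≠ 0) (h2 : s₂ t ≠ 0) (h3 : s₃ t ≠ 0) :
    let g := metG s₀ s₁ s₂ s₃ n₀ n₁ n₂ n₃ n₄ n₅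
    let sd := sdiag s₀ s₁ s₂ s₃
    let T := tors sd g
    let gsym : Fin 4 → Fin 4 → ℝ := fun i j => if i = j then sd i t else 0
    let ginv : Fin 4 → Fin 4 → ℝ := fun i j => if i = j then (sd i t)⁻¹ else 0
    let contr := ∑ γ, ∑ δ, ∑ ε, ∑ ζ, ginv γ δ * T ζ γ ε t * T ε δ ζ t
    let EM : Fin 4 → Fin 4 → ℝ := fun i j =>
      (1 / 4) * contr * gsym i j - (4 / 3) * ∑ γ, ∑ δ, T γ i δ t * T δ j γ t
    let gdet := s₀ t * s₁ t * s₂ t * s₃ t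
    (∑ α, ∑ β, ginv α β * EM α β) = 2 * gdet⁻¹ *
      ((deriv n₃ t) ^ 2 * s₃ t + (deriv n₄ t) ^ 2 * s₂ t + (deriv n₅ t) ^ 2 * s₁ t) := by
  intro g sd T gsym ginv contr EM gdet
  have hneg : ∀ f : ℝ → ℝ, deriv (-f) t = -deriv f t := fun f => by
    rw [show (-f) = fun x => -f x from rfl, deriv.fun_neg]
  have hT : ∀ i j k : Fin 4, T i j k t =
      ![![![0,0,0,0],
          ![0,0,-(deriv n₃ t)/s₀ t,-(deriv n₄ t)/s₀ t],
          ![0,deriv n₃ t/s₀ t,0,-(deriv n₅ t)/s₀ t],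
          ![0,deriv n₄ t/s₀ t,deriv n₅ t/s₀ t,0]],
        ![![0,0,deriv n₃ t/s₁ t,deriv n₄ t/s₁ t],![0,0,0,0],
          ![-(deriv n₃ t)/s₁ t,0,0,0],![-(deriv n₄ t)/s₁ t,0,0,0]],
        ![![0,-(deriv n₃ t)/s₂ t,0,deriv n₅ t/s₂ t],![deriv n₃ t/s₂ t,0,0,0],
          ![0,0,0,0],![-(deriv n₅ t)/s₂ t,0,0,0]],
        ![![0,-(deriv n₄ t)/s₃ t,-(deriv n₅ t)/s₃ t,0],![deriv n₄ t/s₃ t,0,0,0],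
          ![deriv n₅ t/s₃ t,0,0,0],![0,0,0,0]]] i j k := by
    intro i j k
    fin_cases i <;> fin_cases j <;> fin_cases k <;>
      simp [T, tors, chr2, chr1, pdT, g, sd, metG, sdiag, hneg, div_eq_inv_mul,
        Matrix.vecHead, Matrix.vecTail] <;>
      ring_nf
  have hQ0 : (∑ γ, ∑ δ, T γ 0 δ t * T δ 0 γ t) =
      -2*((deriv n₃ t)^2/(s₁ t*s₂ t) + (deriv n₄ t)^2/(s₁ t*s₃ t) + (deriv n₅ t)^2/(s₂ t*s₃ t)) := by
    simp [Fin.sum_univ_four, hT]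
    ring
  have hQ1 : (∑ γ, ∑ δ, T γ 1 δ t * T δ 1 γ t) =
      -2*((deriv n₃ t)^2/(s₀ t*s₂ t) + (deriv n₄ t)^2/(s₀ t*s₃ t)) := by
    simp [Fin.sum_univ_four, hT]
    ring
  have hQ2 : (∑ γ, ∑ δ, T γ 2 δ t * T δ 2 γ t) =
      -2*((deriv n₃ t)^2/(s₀ t*s₁ t) + (deriv n₅ t)^2/(s₀ t*s₃ t)) := by
    simp [Fin.sum_univ_four, hT]
    ring
  have hQ3 : (∑ γ, ∑ δ, T γ 3 δ t * T δ 3 γ t) =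
      -2*((deriv n₄ t)^2/(s₀ t*s₁ t) + (deriv n₅ t)^2/(s₀ t*s₂ t)) := by
    simp [Fin.sum_univ_four, hT]
    ring
  have hcontr : contr = -6*((deriv n₃ t)^2/(s₀ t*s₁ t*s₂ t) + (deriv n₄ t)^2/(s₀ t*s₁ t*s₃ t)
      + (deriv n₅ t)^2/(s₀ t*s₂ t*s₃ t)) := by
    simp [contr, ginv, sd, sdiag, Fin.sum_univ_four, hT]
    field_simp
    ring
  simp only [Fin.sum_univ_four]
  rw [show (gdet:ℝ) = s₀ t * s₁ t * s₂ t * s₃ t from rfl]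
  simp only [EM, ginv, gsym, sd, sdiag]
  simp (config := { decide := true }) only [if_true, if_false]
  norm_num [hQ0, hQ1, hQ2, hQ3, hcontr]
  simp only [Matrix.cons_val_two, Matrix.cons_val_three, Matrix.vecHead, Matrix.vecTail, Function.comp_apply, Fin.succ_zero_eq_one, Fin.succ_one_eq_two, Matrix.cons_val_zero, Matrix.cons_val_one]
  field_simp
  ring
end

section
/- For the non-symmetric metric g_{ij} on ℝ⁴ given by the matrix with rows (s₀, n₀, n₁, n₂), (−n₀, s₁, n₃, n₄), (−n₁, −n₃, s₂, n₅), (−n₂, −n₄, −n₅, s₃), with g := s₀s₁s₂s₃, the energy-momentum tensor T_{ij} = ¼ g^{\underline{γδ}} T^ζ_{γε} T^ε_{δζ} g_{\underline{ij}} − (4/3) T^γ_{iδ} T^δ_{jγ} satisfies the explicit identity T_{ij} = −(3/2) g⁻¹ ( (n₃′(t))² s₃(t) + (n₄′(t))² s₂(t) + (n₅′(t))² s₁(t) ) g_{\underline{ij}} − (4/3) T^α_{iβ} T^β_{jα} for all i, j ∈ {0,1,2,3}. -/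
private lemma deriv_neg_fun (f : ℝ → ℝ) (t : ℝ) : deriv (-f) t = -deriv f t := by
  rw [show (-f) = fun x => -f x from rfl, deriv.fun_neg]

set_option maxHeartbeats 3000000 in
private lemma contr_eq (s₀ s₁ s₂ s₃ n₀ n₁ n₂ n₃ n₄ n₅ : ℝ → ℝ) (t : ℝ)
    (h0 : s₀ t ≠ 0) (h1 : s₁ t ≠ 0) (h2 : s₂ t ≠ 0) (h3 : s₃ t ≠ 0) :
    (∑ γ, ∑ δ, ∑ ε, ∑ ζ, (if γ = δ then (sdiag s₀ s₁ s₂ s₃ γ t)⁻¹ else 0) *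
        tors (sdiag s₀ s₁ s₂ s₃) (metG s₀ s₁ s₂ s₃ n₀ n₁ n₂ n₃ n₄ n₅) ζ γ ε t *
        tors (sdiag s₀ s₁ s₂ s₃) (metG s₀ s₁ s₂ s₃ n₀ n₁ n₂ n₃ n₄ n₅) ε δ ζ t) =
      -6 * (s₀ t * s₁ t * s₂ t * s₃ t)⁻¹ *
        ((deriv n₃ t) ^ 2 * s₃ t + (deriv n₄ t) ^ 2 * s₂ t + (deriv n₅ t) ^ 2 * s₁ t) := by
  set g := metG s₀ s₁ s₂ s₃ n₀ n₁ n₂ n₃ n₄ n₅ with hg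
  set sd := sdiag s₀ s₁ s₂ s₃ with hsd
  set A : Fin 4 → Fin 4 → ℝ :=
      ![![0, -2*deriv n₀ t, -2*deriv n₁ t, -2*deriv n₂ t],
        ![2*deriv n₀ t, 0, -2*deriv n₃ t, -2*deriv n₄ t],
        ![2*deriv n₁ t, 2*deriv n₃ t, 0, -2*deriv n₅ t],
        ![2*deriv n₂ t, 2*deriv n₄ t, 2*deriv n₅ t, 0]] with hA'
  have hA : ∀ p q : Fin 4, deriv (g q p) t - deriv (g p q) t = A p q := by
    intro p q
    fin_cases p <;> fin_cases q <;>
      simp [hg, hA', metG, deriv_neg_fun] <;> ring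
  have tval : ∀ a b c : Fin 4, tors sd g a b c t = (sd a t)⁻¹ * (1/2) *
      ((if c = 0 then A a b else 0) + (if b = 0 then A c a else 0)
        - (if a = 0 then A c b else 0)) := by
    intro a b c
    rw [← hA a b, ← hA c a, ← hA c b]
    simp only [tors, chr2, chr1, pdT]
    split_ifs <;> ring
  simp only [Fin.sum_univ_four, tval]
  simp only [Fin.isValue, Fin.reduceEq, reduceIte, ite_true, ite_false]
  simp only [hA', hsd, sdiag, Matrix.cons_val_zero, Matrix.cons_val_one, Matrix.cons_val_two, Matrix.cons_val_three, Matrix.head_cons, Matrix.tail_cons]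
  norm_num
  field_simp
  ring

/-- explicit form of the energy-momentum tensor built from the torsion of
the non-symmetric metric `metG`. -/
theorem stmt_14 (s₀ s₁ s₂ s₃ n₀ n₁ n₂ n₃ n₄ n₅ : ℝ → ℝ)
    (hd : ∀ f ∈ [s₀, s₁, s₂, s₃, n₀, n₁, n₂, n₃, n₄, n₅], Differentiable ℝ f)
    (t : ℝ) (h0 : s₀ t ≠ 0) (h1 : s₁ t ≠ 0) (h2 : s₂ t ≠ 0) (h3 : s₃ t ≠ 0) :
    let g := metG s₀ s₁ s₂ s₃ n₀ n₁ n₂ n₃ n₄ n₅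
    let sd := sdiag s₀ s₁ s₂ s₃
    let T := tors sd g
    let gsym : Fin 4 → Fin 4 → ℝ := fun i j => if i = j then sd i t else 0
    let ginv : Fin 4 → Fin 4 → ℝ := fun i j => if i = j then (sd i t)⁻¹ else 0
    let contr := ∑ γ, ∑ δ, ∑ ε, ∑ ζ, ginv γ δ * T ζ γ ε t * T ε δ ζ t
    let EM : Fin 4 → Fin 4 → ℝ := fun i j =>
      (1 / 4) * contr * gsym i j - (4 / 3) * ∑ γ, ∑ δ, T γ i δ t * T δ j γ t
    let gdet := s₀ t * s₁ t * s₂ t * s₃ t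
    ∀ i j, EM i j = -(3 / 2) * gdet⁻¹ *
        ((deriv n₃ t) ^ 2 * s₃ t + (deriv n₄ t) ^ 2 * s₂ t + (deriv n₅ t) ^ 2 * s₁ t) *
        gsym i j
      - (4 / 3) * ∑ α, ∑ β, T α i β t * T β j α t := by
  intro g sd T gsym ginv contr EM gdet i j
  have key : contr = -6 * gdet⁻¹ *
      ((deriv n₃ t) ^ 2 * s₃ t + (deriv n₄ t) ^ 2 * s₂ t + (deriv n₅ t) ^ 2 * s₁ t) :=
    contr_eq s₀ s₁ s₂ s₃ n₀ n₁ n₂ n₃ n₄ n₅ t h0 h1 h2 h3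
  show (1 / 4) * contr * gsym i j - _ = _
  rw [key]; ring
end

section
/- For the non-symmetric metric g_{ij} on ℝ⁴ given by the matrix with rows (s₀, n₀, n₁, n₂), (−n₀, s₁, n₃, n₄), (−n₁, −n₃, s₂, n₅), (−n₂, −n₄, −n₅, s₃), with g := s₀s₁s₂s₃ and Σ := (n₃′)²s₃ + (n₄′)²s₂ + (n₅′)²s₁, the energy-momentum tensor T_{ij} = ¼ g^{\underline{γδ}} T^ζ_{γε} T^ε_{δζ} g_{\underline{ij}} − (4/3) T^γ_{iδ} T^δ_{jγ}, together with any velocity components u^α, yields the energy density ρ := T_{αβ}u^αu^β = −(3/2) g⁻¹ Σ (g_{\underline{αβ}}u^αu^β) − (4/3) T^γ_{αδ} T^δ_{βγ} u^αu^β, which for a unit velocity (g_{\underline{αβ}}u^αu^β = 1) equals −(3/2) g⁻¹ Σ − (4/3) T^γ_{αδ} T^δ_{βγ} u^αu^β; and the pressure p := −⅓(T^α_α − ρ) then equals −(7/6) g⁻¹ Σ − (4/9) T^γ_{αδ} T^δ_{βγ} u^αu^β. -/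
set_option maxHeartbeats 2000000 in
/-- energy density and pressure of the fluid obtained from the
energy-momentum tensor of the non-symmetric metric `metG`, for an arbitrary velocity
`u^α`, and their form for a unit velocity. -/
theorem stmt_15 (s₀ s₁ s₂ s₃ n₀ n₁ n₂ n₃ n₄ n₅ : ℝ → ℝ)
    (hd : ∀ f ∈ [s₀, s₁, s₂, s₃, n₀, n₁, n₂, n₃, n₄, n₅], Differentiable ℝ f)
    (t : ℝ) (h0 : s₀ t ≠ 0) (h1 : s₁ t ≠ 0) (h2 : s₂ t ≠ 0) (h3 : s₃ t ≠ 0)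
    (u : Fin 4 → ℝ) :
    let g := metG s₀ s₁ s₂ s₃ n₀ n₁ n₂ n₃ n₄ n₅
    let sd := sdiag s₀ s₁ s₂ s₃
    let T := tors sd g
    let gsym : Fin 4 → Fin 4 → ℝ := fun i j => if i = j then sd i t else 0
    let ginv : Fin 4 → Fin 4 → ℝ := fun i j => if i = j then (sd i t)⁻¹ else 0
    let contr := ∑ γ, ∑ δ, ∑ ε, ∑ ζ, ginv γ δ * T ζ γ ε t * T ε δ ζ t
    let EM : Fin 4 → Fin 4 → ℝ := fun i j =>
      (1 / 4) * contr * gsym i j - (4 / 3) * ∑ γ, ∑ δ, T γ i δ t * T δ j γ t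
    let gdet := s₀ t * s₁ t * s₂ t * s₃ t
    let Sg := (deriv n₃ t) ^ 2 * s₃ t + (deriv n₄ t) ^ 2 * s₂ t + (deriv n₅ t) ^ 2 * s₁ t
    let ρ := ∑ α, ∑ β, EM α β * u α * u β
    let trT := ∑ α, ∑ β, ginv α β * EM α β
    let p := -(1 / 3) * (trT - ρ)
    let X := ∑ α, ∑ β, (∑ γ, ∑ δ, T γ α δ t * T δ β γ t) * u α * u β
    ρ = -(3 / 2) * gdet⁻¹ * Sg * (∑ α, ∑ β, gsym α β * u α * u β) - (4 / 3) * X ∧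
    ((∑ α, ∑ β, gsym α β * u α * u β) = 1 →
      ρ = -(3 / 2) * gdet⁻¹ * Sg - (4 / 3) * X ∧
      p = -(7 / 6) * gdet⁻¹ * Sg - (4 / 9) * X) := by

  intro g sd T gsym ginv contr EM gdet Sg ρ trT p X
  have hneg : ∀ f : ℝ → ℝ, deriv (-f) t = -deriv f t := by
    intro f; rw [Pi.neg_def, deriv.fun_neg]
  have hc : contr = -6 * gdet⁻¹ * Sg := by
    unfold contr ginv T sd g gdet Sg
    simp only [tors, chr2, chr1, pdT, metG, sdiag, Fin.sum_univ_four,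
      Matrix.cons_val_zero, Matrix.cons_val_one, Matrix.head_cons,
      Matrix.cons_val_two, Matrix.cons_val_three, Matrix.tail_cons,
      Fin.reduceEq, if_true, if_false, reduceIte, hneg]
    field_simp
    ring
  have hρ : ρ = (1 / 4) * contr * (∑ α, ∑ β, gsym α β * u α * u β) - (4 / 3) * X := by
    unfold ρ EM X
    simp only [Fin.sum_univ_four]
    ring
  have htr : trT = -(1 / 3) * contr := by
    unfold trT EM contr ginv gsym sd
    simp only [sdiag, Fin.sum_univ_four, Matrix.cons_val_zero, Matrix.cons_val_one,
      Matrix.head_cons, Matrix.cons_val_two, Matrix.cons_val_three, Matrix.tail_cons,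
      Fin.reduceEq, if_true, if_false, reduceIte]
    have key : ∀ a : ℝ, a ≠ 0 → ∀ c d : ℝ, a⁻¹ * (1 / 4 * c * a - d) = 1 / 4 * c - a⁻¹ * d :=
      fun a ha c d => by rw [mul_sub, mul_comm a⁻¹, mul_assoc, mul_inv_cancel₀ ha, mul_one]
    rw [key _ h0, key _ h1, key _ h2, key _ h3]
    ring
  refine ⟨by rw [hρ, hc]; ring, fun hu => ⟨by rw [hρ, hc, hu]; ring, ?_⟩⟩
  unfold p
  rw [htr, hρ, hc, hu]
  ring
end
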